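/- For every Dyck word D, the number of centered multitunnels of D equals the number of returns (equivalently, arches) of Ψ(D): cmt(D) = ret(Ψ(D)). -/

import Mathlib

attribute [local instance] Classical.propDecidable

namespace DyckBij

/-- A word over `Bool` (`true` = up-step `u`, `false` = down-step `d`) is a Dyck word:
equally many `u`'s and `d`'s, and every prefix has at least as many `u`'s as `d`'s. -/
def IsDyck (w : List Bool) : Prop :=
  w.count false = w.count true ∧
    ∀ p : List Bool, p <+: w → p.count false ≤ p.count true

/-- `Matched w i j`: the `u` at (0-indexed) position `i` of `w` is matched (as in matched
parentheses) with the `d` at position `j`, i.e. `w = A u B d C` with `B` a Dyck word,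
`|A| = i` and `j = i + |B| + 1`. -/
def Matched (w : List Bool) (i j : ℕ) : Prop :=
  ∃ A B C : List Bool, IsDyck B ∧ w = A ++ true :: (B ++ false :: C) ∧
    A.length = i ∧ j = i + B.length + 1

/-- Positions `i` and `j` form a matched pair of steps of `w`. -/
def MatchPair (w : List Bool) (i j : ℕ) : Prop :=
  Matched w i j ∨ Matched w j i

/-- The 0-indexed reading order `σ^{(r)}` on a word of length `L`: the first `2r` positions
are read in order, and the remaining positions are read in zigzag
`2r, L-1, 2r+1, L-2, …` (0-indexed). For `r = 0` this is the zigzag order `σ`. -/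
def zigR (r L p : ℕ) : ℕ :=
  if p < 2 * r then p
  else if p % 2 = 0 then p / 2 + r
  else L + r - (p + 1) / 2

/-- The bijection `Ψ_r`: the `p`-th letter of `Ψ_r(w)` is `u` iff the match of the
`σ^{(r)}_p`-th step of `w` does not occur among the previously read steps
`σ^{(r)}_0, …, σ^{(r)}_{p-1}`. -/
noncomputable def psiR (r : ℕ) (w : List Bool) : List Bool :=
  List.ofFn fun p : Fin w.length =>
    if ∃ p' : ℕ, p' < (p : ℕ) ∧
        MatchPair w (zigR r w.length p') (zigR r w.length (p : ℕ))
    then false else true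

/-- The bijection `Ψ = Ψ_0`. -/
noncomputable def psi : List Bool → List Bool := psiR 0

/-- Number of tunnels of `w` with `|A| = |C| + 2r` (midpoint at `x = n + r`),
i.e. decompositions `w = A u B d C` with `B` a Dyck word; tunnels are indexed by `|A|`. -/
noncomputable def tunEq (r : ℕ) (w : List Bool) : ℕ :=
  {i : ℕ | ∃ A B C : List Bool, IsDyck B ∧ w = A ++ true :: (B ++ false :: C) ∧
    A.length = i ∧ A.length = C.length + 2 * r}.ncard

/-- Number of tunnels of `w` with `|A| > |C| + 2r` (midpoint in `x > n + r`). -/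
noncomputable def tunGt (r : ℕ) (w : List Bool) : ℕ :=
  {i : ℕ | ∃ A B C : List Bool, IsDyck B ∧ w = A ++ true :: (B ++ false :: C) ∧
    A.length = i ∧ C.length + 2 * r < A.length}.ncard

/-- Number of tunnels of `w` with `|A| ≤ |C| + 2r` (midpoint in `x ≤ n + r`). -/
noncomputable def tunLe (r : ℕ) (w : List Bool) : ℕ :=
  {i : ℕ | ∃ A B C : List Bool, IsDyck B ∧ w = A ++ true :: (B ++ false :: C) ∧
    A.length = i ∧ A.length ≤ C.length + 2 * r}.ncard

/-- Number of centered tunnels `ct(w)`. -/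
noncomputable def ctun (w : List Bool) : ℕ := tunEq 0 w

/-- Number of right tunnels `rt(w)`. -/
noncomputable def rtun (w : List Bool) : ℕ := tunGt 0 w

/-- Number of left tunnels `lt(w)`: tunnels with `|A| < |C|`. -/
noncomputable def ltun (w : List Bool) : ℕ :=
  {i : ℕ | ∃ A B C : List Bool, IsDyck B ∧ w = A ++ true :: (B ++ false :: C) ∧
    A.length = i ∧ A.length < C.length}.ncard

/-- Number of multitunnels of `w` with `|A| = |C| + 2r` (midpoint at `x = n + r`):
decompositions `w = A B C` with `B` a nonempty Dyck word, indexed by `(|A|, |B|)`. -/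
noncomputable def mtunEq (r : ℕ) (w : List Bool) : ℕ :=
  {q : ℕ × ℕ | ∃ A B C : List Bool, IsDyck B ∧ B ≠ [] ∧ w = A ++ B ++ C ∧
    A.length = q.1 ∧ B.length = q.2 ∧ A.length = C.length + 2 * r}.ncard

/-- Number of centered multitunnels `cmt(w)`. -/
noncomputable def cmtun (w : List Bool) : ℕ := mtunEq 0 w

/-- Number of hills `h(w)`: decompositions `w = X u d Y` with `X, Y` Dyck words. -/
noncomputable def numHills (w : List Bool) : ℕ :=
  {i : ℕ | ∃ X Y : List Bool, IsDyck X ∧ IsDyck Y ∧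
    w = X ++ true :: false :: Y ∧ X.length = i}.ncard

/-- Number of hills of `w` lying in `x > 2r`, i.e. with `|X| ≥ 2r`. -/
noncomputable def numHillsAfter (r : ℕ) (w : List Bool) : ℕ :=
  {i : ℕ | ∃ X Y : List Bool, IsDyck X ∧ IsDyck Y ∧
    w = X ++ true :: false :: Y ∧ X.length = i ∧ 2 * r ≤ X.length}.ncard

/-- Number of arches (equivalently, returns) `ret(w)`: decompositions
`w = X (u B d) Y` with `X, B, Y` Dyck words. -/
noncomputable def numArches (w : List Bool) : ℕ :=
  {i : ℕ | ∃ X B Y : List Bool, IsDyck X ∧ IsDyck B ∧ IsDyck Y ∧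
    w = X ++ true :: (B ++ false :: Y) ∧ X.length = i}.ncard

/-- Number of arches of `w` lying in `x ≥ 2r`, i.e. with `|X| ≥ 2r`. -/
noncomputable def numArchesAfter (r : ℕ) (w : List Bool) : ℕ :=
  {i : ℕ | ∃ X B Y : List Bool, IsDyck X ∧ IsDyck B ∧ IsDyck Y ∧
    w = X ++ true :: (B ++ false :: Y) ∧ X.length = i ∧ 2 * r ≤ X.length}.ncard

/-- Number of odd rises `odr(w)`: `u`-steps at odd 1-indexed positions
(even 0-indexed positions). -/
noncomputable def oddRises (w : List Bool) : ℕ :=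
  {p : ℕ | p < w.length ∧ p % 2 = 0 ∧ w.getD p false = true}.ncard

/-- Number of even rises `er(w)`: `u`-steps at even 1-indexed positions
(odd 0-indexed positions). -/
noncomputable def evenRises (w : List Bool) : ℕ :=
  {p : ℕ | p < w.length ∧ p % 2 = 1 ∧ w.getD p false = true}.ncard

/-- Number of odd rises of `w` at 1-indexed positions `> 2r`. -/
noncomputable def oddRisesAfter (r : ℕ) (w : List Bool) : ℕ :=
  {p : ℕ | p < w.length ∧ p % 2 = 0 ∧ 2 * r ≤ p ∧ w.getD p false = true}.ncard

/-- Number of even rises of `w` at 1-indexed positions `> 2r`. -/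
noncomputable def evenRisesAfter (r : ℕ) (w : List Bool) : ℕ :=
  {p : ℕ | p < w.length ∧ p % 2 = 1 ∧ 2 * r ≤ p ∧ w.getD p false = true}.ncard

/-- Number of `u`-steps of `w` at 1-indexed positions `≤ 2r`. -/
noncomputable def upstepsBefore (r : ℕ) (w : List Bool) : ℕ :=
  {p : ℕ | p < w.length ∧ p < 2 * r ∧ w.getD p false = true}.ncard

/-- Number of peaks of `w`: occurrences of the factor `u d`. -/
noncomputable def numPeaks (w : List Bool) : ℕ :=
  {i : ℕ | i + 2 ≤ w.length ∧ w.getD i false = true ∧ w.getD (i + 1) true = false}.ncard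

/-- Number of occurrences in `w` of a factor of length 3 beginning with `u`
and ending with `d` (occurrences of `u⋆d`). -/
noncomputable def numUStarD (w : List Bool) : ℕ :=
  {i : ℕ | i + 3 ≤ w.length ∧ w.getD i false = true ∧ w.getD (i + 2) true = false}.ncard

/-- `ih(w)`: 1 if `w` begins with the factor `u d`, else 0. -/
noncomputable def initHill (w : List Bool) : ℕ :=
  if w.take 2 = [true, false] then 1 else 0

/-- `fh(w)`: 1 if `w = X u d` with `X` a Dyck word, else 0. -/
noncomputable def finHill (w : List Bool) : ℕ :=
  if ∃ X : List Bool, IsDyck X ∧ w = X ++ [true, false] then 1 else 0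

/-- `π` avoids the pattern 321. -/
def Avoids321 {n : ℕ} (π : Equiv.Perm (Fin n)) : Prop :=
  ¬ ∃ i j k : Fin n, i < j ∧ j < k ∧ π k < π j ∧ π j < π i

/-- `π` avoids the pattern 132. -/
def Avoids132 {n : ℕ} (π : Equiv.Perm (Fin n)) : Prop :=
  ¬ ∃ i j k : Fin n, i < j ∧ j < k ∧ π i < π k ∧ π k < π j

/-- Number of fixed points of `π`. -/
noncomputable def fixedPts {n : ℕ} (π : Equiv.Perm (Fin n)) : ℕ :=
  {i : Fin n | π i = i}.ncard

/-- Number of excedances of `π`. -/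
noncomputable def excedances {n : ℕ} (π : Equiv.Perm (Fin n)) : ℕ :=
  {i : Fin n | i < π i}.ncard

/-- Number of descents of `π`. -/
noncomputable def descents {n : ℕ} (π : Equiv.Perm (Fin n)) : ℕ :=
  {i : ℕ | ∃ (h1 : i < n) (h2 : i + 1 < n), π ⟨i + 1, h2⟩ < π ⟨i, h1⟩}.ncard

/-- `α_r(π) = #{i : π(i) = i + r}` (stated 0-indexed, equivalent to the 1-indexed version). -/
noncomputable def alphaStat {n : ℕ} (r : ℕ) (π : Equiv.Perm (Fin n)) : ℕ :=
  {i : Fin n | (π i : ℕ) = (i : ℕ) + r}.ncard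

/-- `β_r(π) = #{i : i > r, π(i) = i}` (for 1-indexed `i`; 0-indexed this is `r ≤ i`). -/
noncomputable def betaStat {n : ℕ} (r : ℕ) (π : Equiv.Perm (Fin n)) : ℕ :=
  {i : Fin n | r ≤ (i : ℕ) ∧ π i = i}.ncard


/-!
Reading `D` in the zigzag order `σ`, `Ψ(D)` has a `u` at the first-read step of each matched
pair of `D` and a `d` at the second, so the matching of `D`, transported along `σ`, pairs every
`u` of `Ψ(D)` with a later `d`. For a word paired in this way, a prefix is a Dyck word exactly
when it is a union of pairs. The prefix of length `2a` of `Ψ(D)` consists of the `a` leftmost and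
the `a` rightmost steps of `D`; it is a union of pairs iff the middle factor `B` of `D = A B C`,
`|A| = |C| = a`, is one, i.e. iff `B` is a Dyck word. The arches of `Ψ(D)` begin right after its
proper Dyck prefixes, whose lengths are even, so they correspond to the centered multitunnels
of `D`.
-/

section DyckWords

lemma IsDyck.length_mod_two {w : List Bool} (h : IsDyck w) : w.length % 2 = 0 := by
  have := List.count_false_add_count_true w
  have := h.1
  omega

lemma IsDyck.right_of_append {X C : List Bool} (h : IsDyck (X ++ C)) (hX : IsDyck X) :
    IsDyck C := by
  refine ⟨by simpa [hX.1] using h.1, fun p hp => ?_⟩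
  have := h.2 (X ++ p) ((List.prefix_append_right_inj X).mpr hp)
  simp only [List.count_append, hX.1] at this
  omega

lemma IsDyck.drop {w : List Bool} (hw : IsDyck w) {k : ℕ} (hk : IsDyck (w.take k)) :
    IsDyck (w.drop k) :=
  IsDyck.right_of_append (by rwa [List.take_append_drop]) hk

def toDyckStep : Bool → DyckStep
  | true => .U
  | false => .D

def ofDyckStep : DyckStep → Bool
  | .U => true
  | .D => false

lemma ofDyckStep_toDyckStep (b : Bool) : ofDyckStep (toDyckStep b) = b := by
  cases b <;> rfl

lemma toDyckStep_ofDyckStep (s : DyckStep) : toDyckStep (ofDyckStep s) = s := by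
  cases s <;> rfl

def IsDyck.toDyckWord {w : List Bool} (h : IsDyck w) : DyckWord where
  toList := w.map toDyckStep
  count_U_eq_count_D := by
    have hinj := (Function.LeftInverse.injective ofDyckStep_toDyckStep)
    rw [show DyckStep.U = toDyckStep true from rfl, show DyckStep.D = toDyckStep false from rfl,
      List.count_map_of_injective _ _ hinj, List.count_map_of_injective _ _ hinj]
    exact h.1.symm
  count_D_le_count_U i := by
    have hinj := (Function.LeftInverse.injective ofDyckStep_toDyckStep)
    rw [← List.map_take, show DyckStep.U = toDyckStep true from rfl,
      show DyckStep.D = toDyckStep false from rfl,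
      List.count_map_of_injective _ _ hinj, List.count_map_of_injective _ _ hinj]
    exact h.2 _ (List.take_prefix i w)

lemma isDyck_map_ofDyckStep (p : DyckWord) : IsDyck (p.toList.map ofDyckStep) := by
  have hinj := (Function.LeftInverse.injective toDyckStep_ofDyckStep)
  have hcount (l : List DyckStep) : (l.map ofDyckStep).count false = l.count .D ∧
      (l.map ofDyckStep).count true = l.count .U :=
    ⟨List.count_map_of_injective _ _ hinj .D, List.count_map_of_injective _ _ hinj .U⟩
  refine ⟨by rw [(hcount _).1, (hcount _).2, p.count_U_eq_count_D], fun q hq => ?_⟩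
  rw [List.prefix_iff_eq_take.mp hq, ← List.map_take, (hcount _).1, (hcount _).2]
  exact p.count_D_le_count_U _

lemma IsDyck.exists_arch {w : List Bool} (hw : IsDyck w) (hne : w ≠ []) :
    ∃ B C, IsDyck B ∧ IsDyck C ∧ w = true :: (B ++ false :: C) := by
  have hp : hw.toDyckWord ≠ 0 := by
    rwa [← DyckWord.toList_ne_nil, IsDyck.toDyckWord, Ne, List.map_eq_nil_iff]
  refine ⟨_, _, isDyck_map_ofDyckStep hw.toDyckWord.insidePart,
    isDyck_map_ofDyckStep hw.toDyckWord.outsidePart, ?_⟩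
  calc w = (hw.toDyckWord.insidePart.nest + hw.toDyckWord.outsidePart).toList.map ofDyckStep := by
        rw [DyckWord.nest_insidePart_add_outsidePart hp, IsDyck.toDyckWord, List.map_map,
          show ofDyckStep ∘ toDyckStep = id from funext ofDyckStep_toDyckStep, List.map_id]
    _ = _ := by
        show List.map ofDyckStep ([DyckStep.U] ++ _ ++ [DyckStep.D] ++ _) = _
        simp [ofDyckStep]

end DyckWords

section Matching

variable {w : List Bool} {i j : ℕ}

lemma Matched.lt (h : Matched w i j) : i < j := by
  obtain ⟨A, B, C, -, -, -, rfl⟩ := h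
  omega

lemma Matched.lt_length (h : Matched w i j) : j < w.length := by
  obtain ⟨A, B, C, -, rfl, rfl, rfl⟩ := h
  simp
  omega

lemma Matched.getElem?_left (h : Matched w i j) : w[i]? = some true := by
  obtain ⟨A, B, C, -, rfl, rfl, -⟩ := h
  simp

lemma Matched.getElem?_right (h : Matched w i j) : w[j]? = some false := by
  obtain ⟨A, B, C, -, rfl, rfl, rfl⟩ := h
  rw [show A ++ true :: (B ++ false :: C) = (A ++ true :: B) ++ false :: C by simp,
    List.getElem?_append_right (by simp; omega)]
  simp

lemma Matched.append (h : Matched w i j) (P S : List Bool) :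
    Matched (P ++ w ++ S) (P.length + i) (P.length + j) := by
  obtain ⟨A, B, C, hB, rfl, rfl, rfl⟩ := h
  exact ⟨P ++ A, B, C ++ S, hB, by simp, by simp, by omega⟩

lemma MatchPair.append (h : MatchPair w i j) (P S : List Bool) :
    MatchPair (P ++ w ++ S) (P.length + i) (P.length + j) :=
  h.imp (·.append P S) (·.append P S)

lemma MatchPair.symm (h : MatchPair w i j) : MatchPair w j i :=
  Or.symm h

lemma IsDyck.eq_of_append_false_eq {B B' C C' : List Bool} (hB : IsDyck B) (hB' : IsDyck B')
    (h : B ++ false :: C = B' ++ false :: C') : B = B' := by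
  wlog hle : B.length ≤ B'.length generalizing B B' C C'
  · exact (this hB' hB h.symm (by omega)).symm
  obtain ⟨E, rfl⟩ : B <+: B' := List.prefix_of_prefix_length_le ⟨_, h⟩ ⟨_, rfl⟩ hle
  rcases eq_or_ne E [] with rfl | hE
  · simp
  · obtain ⟨E', E'', -, -, rfl⟩ := (hB'.right_of_append hB).exists_arch hE
    simp at h

lemma Matched.right_unique {j' : ℕ} (h : Matched w i j) (h' : Matched w i j') : j = j' := by
  obtain ⟨A, B, C, hB, rfl, rfl, rfl⟩ := h
  obtain ⟨A', B', C', hB', hw, hA, rfl⟩ := h'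
  obtain ⟨-, hrest⟩ := List.append_inj hw hA.symm
  rw [hB.eq_of_append_false_eq hB' (List.cons_injective hrest)]

lemma Matched.left_unique {i' : ℕ} (h : Matched w i j) (h' : Matched w i' j) : i = i' := by
  wlog hle : i ≤ i' generalizing i i'
  · exact (this h' h (by omega)).symm
  by_contra hne
  obtain ⟨A, B, C, hB, rfl, rfl, rfl⟩ := h
  obtain ⟨A', B', C', hB', hw, rfl, hj⟩ := h'
  have hAB : A ++ true :: B = A' ++ true :: B' :=
    (List.append_inj (by simpa using hw) (by simp; omega)).1
  -- `B` would end with `u B'`, leaving a prefix of `B` with more `d`'s than `u`'s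
  obtain ⟨X, hX⟩ : ∃ X, B = X ++ true :: B' := by
    rcases List.append_eq_append_iff.mp hAB with ⟨a', rfl, ha'⟩ | ⟨c', rfl, -⟩
    · rcases a' with _ | ⟨x, X⟩
      · simp at hne
      · exact ⟨X, (by simpa using ha' : x = true ∧ _).2⟩
    · simp only [List.length_append] at hle hne
      omega
  have hbal := hB.1
  have hXle := hB.2 X ⟨_, hX.symm⟩
  rw [hX] at hbal
  simp [hB'.1] at hbal
  omega

lemma MatchPair.unique {j' : ℕ} (h : MatchPair w i j) (h' : MatchPair w i j') : j = j' := by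
  rcases h with h | h <;> rcases h' with h' | h'
  · exact h.right_unique h'
  · simpa using h.getElem?_left.symm.trans h'.getElem?_right
  · simpa using h.getElem?_right.symm.trans h'.getElem?_left
  · exact h.left_unique h'

lemma IsDyck.exists_matchPair (hw : IsDyck w) (hi : i < w.length) : ∃ j, MatchPair w i j := by
  obtain ⟨n, hn⟩ : ∃ n, w.length ≤ n := ⟨_, le_rfl⟩
  induction n generalizing w i with
  | zero => omega
  | succ n ih =>
    obtain ⟨B, C, hB, hC, rfl⟩ := hw.exists_arch (List.ne_nil_of_length_pos (by omega))
    have hlen : (true :: (B ++ false :: C)).length = B.length + C.length + 2 := by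
      simp
      omega
    have harch : Matched (true :: (B ++ false :: C)) 0 (B.length + 1) :=
      ⟨[], B, C, hB, rfl, rfl, by simp⟩
    rcases lt_trichotomy i (B.length + 1) with hlt | rfl | hgt
    · rcases i with _ | i
      · exact ⟨_, .inl harch⟩
      · obtain ⟨j, hj⟩ := ih hB (i := i) (by omega) (by omega)
        exact ⟨1 + j, by simpa [add_comm] using hj.append [true] (false :: C)⟩
    · exact ⟨0, .inr harch⟩
    · obtain ⟨j, hj⟩ := ih hC (i := i - (B.length + 2)) (by omega) (by omega)
      refine ⟨B.length + 2 + j, ?_⟩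
      simpa [show B.length + 2 + (i - (B.length + 2)) = i by omega] using
        hj.append (true :: B ++ [false]) []

/-- Junk value `0` when position `i` has no match. -/
noncomputable def partner (w : List Bool) (i : ℕ) : ℕ :=
  if h : ∃ j, MatchPair w i j then h.choose else 0

lemma partner_eq (h : MatchPair w i j) : partner w i = j := by
  have hex : ∃ j, MatchPair w i j := ⟨j, h⟩
  rw [partner, dif_pos hex]
  exact hex.choose_spec.unique h

lemma IsDyck.matchPair_partner (hw : IsDyck w) (hi : i < w.length) :
    MatchPair w i (partner w i) := by
  obtain ⟨j, hj⟩ := hw.exists_matchPair hi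
  rwa [partner_eq hj]

end Matching

section Pairing

open Finset

lemma count_take_eq_card (l : List Bool) (b : Bool) (t : ℕ) :
    (l.take t).count b = #{p ∈ range t | l[p]? = some b} := by
  induction t with
  | zero => simp
  | succ t ih =>
    rw [List.take_add_one, List.count_append, ih, range_add_one, filter_insert]
    rcases hl : l[t]? with _ | x
    · simp
    · by_cases hx : x = b
      · simp [hx, card_insert_of_notMem]
      · simp [hx]

def PairedBy (W : List Bool) (τ : ℕ → ℕ) : Prop :=
  ∀ p < W.length, τ p < W.length ∧ τ (τ p) = p ∧ τ p ≠ p ∧ W[p]? = some (decide (p < τ p))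

variable {W : List Bool} {τ : ℕ → ℕ}

lemma PairedBy.count_true_take (h : PairedBy W τ) {t : ℕ} (ht : t ≤ W.length) :
    (W.take t).count true = #{p ∈ range t | p < τ p} := by
  rw [count_take_eq_card]
  refine congrArg card (filter_congr fun p hp => ?_)
  simp [(h p (by simp at hp; omega)).2.2.2]

/-- `τ` maps the `d`'s of `W.take t` bijectively onto the `u`'s matched inside `W.take t`. -/
lemma PairedBy.count_false_take (h : PairedBy W τ) {t : ℕ} (ht : t ≤ W.length) :
    (W.take t).count false = #{p ∈ range t | p < τ p ∧ τ p < t} := by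
  rw [count_take_eq_card]
  refine card_nbij' τ τ (fun p hp => ?_) (fun p hp => ?_) (fun p hp => ?_) (fun p hp => ?_) <;>
    simp only [coe_filter, Set.mem_ofPred_eq, mem_range] at hp ⊢
  · obtain ⟨-, hττ, hne, hW⟩ := h p (by omega)
    rw [hp.2] at hW
    simp at hW
    omega
  · obtain ⟨-, -, -, hW⟩ := h (τ p) (by omega)
    rw [hW, h p (by omega) |>.2.1]
    simp
    omega
  · exact (h p (by omega)).2.1
  · exact (h p (by omega)).2.1

lemma PairedBy.isDyck_take_iff (h : PairedBy W τ) {t : ℕ} (ht : t ≤ W.length) :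
    IsDyck (W.take t) ↔ ∀ p < t, τ p < t := by
  rw [IsDyck, h.count_false_take ht, h.count_true_take ht, ← filter_filter,
    card_filter_eq_iff]
  constructor
  · rintro ⟨hclosed, -⟩ p hp
    by_cases hlt : p < τ p
    · exact hclosed p (mem_filter.2 ⟨mem_range.2 hp, hlt⟩)
    · have := (h p (by omega)).2.2.1
      omega
  · intro hclosed
    refine ⟨fun p hp => hclosed p (mem_range.1 (mem_filter.1 hp).1), fun q hq => ?_⟩
    have hs : (W.take t).take q.length = W.take (min q.length t) := List.take_take ..
    rw [List.prefix_iff_eq_take.mp hq, hs, h.count_false_take (by omega),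
      h.count_true_take (by omega)]
    exact card_le_card fun p hp => by simp only [mem_filter] at hp ⊢; exact ⟨hp.1, hp.2.1⟩

lemma PairedBy.isDyck (h : PairedBy W τ) : IsDyck W := by
  simpa using (h.isDyck_take_iff le_rfl).mpr fun p hp => (h p hp).1

end Pairing

lemma IsDyck.pairedBy_partner {w : List Bool} (hw : IsDyck w) : PairedBy w (partner w) := by
  intro p hp
  have hmatch := hw.matchPair_partner hp
  refine ⟨?_, partner_eq hmatch.symm, ?_, ?_⟩ <;> rcases hmatch with h | h
  · exact h.lt_length
  · exact h.lt.trans hp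
  · exact h.lt.ne'
  · exact h.lt.ne
  · simp [h.getElem?_left, h.lt]
  · simp [h.getElem?_right, h.lt.le]

section Zigzag

variable {L p q : ℕ}

def zigInv (L q : ℕ) : ℕ := if 2 * q < L then 2 * q else 2 * (L - 1 - q) + 1

lemma zigR_zero_lt (hp : p < L) : zigR 0 L p < L := by
  unfold zigR
  split_ifs <;> omega

lemma zigInv_lt (hq : q < L) : zigInv L q < L := by
  unfold zigInv
  split_ifs <;> omega

lemma zigR_zero_zigInv (hq : q < L) : zigR 0 L (zigInv L q) = q := by
  unfold zigInv zigR
  split_ifs <;> omega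

lemma zigInv_zigR_zero (hp : p < L) : zigInv L (zigR 0 L p) = p := by
  unfold zigInv zigR
  split_ifs <;> omega

lemma lt_two_mul_iff_zigR_zero {a : ℕ} (ha : 2 * a ≤ L) (hp : p < L) :
    p < 2 * a ↔ zigR 0 L p < a ∨ L - a ≤ zigR 0 L p := by
  unfold zigR
  split_ifs <;> omega

end Zigzag

noncomputable def psiPartner (w : List Bool) (p : ℕ) : ℕ :=
  zigInv w.length (partner w (zigR 0 w.length p))

lemma length_psi (w : List Bool) : (psi w).length = w.length := by
  simp [psi, psiR]

lemma IsDyck.pairedBy_psiPartner {w : List Bool} (hw : IsDyck w) :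
    PairedBy (psi w) (psiPartner w) := by
  have hP := hw.pairedBy_partner
  intro p hp
  rw [length_psi] at hp
  set x := zigR 0 w.length p with hx
  have hxL : x < w.length := zigR_zero_lt hp
  obtain ⟨hμL, hμμ, hμne, -⟩ := hP x hxL
  have hzig : zigR 0 w.length (psiPartner w p) = partner w x := zigR_zero_zigInv hμL
  have hττ : psiPartner w (psiPartner w p) = p := by
    rw [psiPartner, hzig, hμμ, hx, zigInv_zigR_zero hp]
  have hτne : psiPartner w p ≠ p := fun h => hμne (by rw [← hzig, h])
  refine ⟨by rw [length_psi]; exact zigInv_lt hμL, hττ, hτne, ?_⟩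
  have hread : (∃ p' < p, MatchPair w (zigR 0 w.length p') x) ↔ psiPartner w p < p := by
    constructor
    · rintro ⟨p', hp', hmatch⟩
      rwa [psiPartner, ← hx, partner_eq hmatch.symm, zigInv_zigR_zero (by omega)]
    · intro hlt
      exact ⟨_, hlt, hzig ▸ (hw.matchPair_partner hxL).symm⟩
  simp only [psi, psiR, List.getElem?_ofFn, hp, dite_true, ← hx, hread]
  by_cases hlt : psiPartner w p < p
  · simp [hlt, hlt.le]
  · simp [hlt, lt_of_le_of_ne (not_lt.mp hlt) hτne.symm]

section Middle

def middle (w : List Bool) (a : ℕ) : List Bool := (w.drop a).take (w.length - 2 * a)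

variable {w : List Bool} {a : ℕ}

lemma length_middle (ha : 2 * a ≤ w.length) : (middle w a).length = w.length - 2 * a := by
  simp only [middle, List.length_take, List.length_drop]
  omega

lemma take_append_middle_append_drop (ha : 2 * a ≤ w.length) :
    w.take a ++ middle w a ++ w.drop (w.length - a) = w := by
  rw [List.append_assoc, middle,
    show w.length - a = a + (w.length - 2 * a) by omega, ← List.drop_drop,
    List.take_append_drop, List.take_append_drop]

lemma getElem?_middle {q : ℕ} (hq : q < w.length - 2 * a) : (middle w a)[q]? = w[a + q]? := by
  rw [middle, List.getElem?_take_of_lt hq, List.getElem?_drop]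

lemma partner_append_append {A M C : List Bool} (hM : IsDyck M) {q : ℕ} (hq : q < M.length) :
    partner (A ++ M ++ C) (A.length + q) = A.length + partner M q :=
  partner_eq ((hM.matchPair_partner hq).append A C)

lemma IsDyck.isDyck_middle_iff (hw : IsDyck w) (ha : 2 * a ≤ w.length) :
    IsDyck (middle w a) ↔ ∀ q, a ≤ q → q < w.length - a →
      a ≤ partner w q ∧ partner w q < w.length - a := by
  constructor
  · intro hM q hq hq'
    have hqM : q - a < (middle w a).length := by
      rw [length_middle ha]
      omega
    have hpartner := partner_append_append (A := w.take a) (C := w.drop (w.length - a)) hM hqM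
    have hA : (w.take a).length = a := by
      simp only [List.length_take]
      omega
    rw [take_append_middle_append_drop ha, hA, show a + (q - a) = q by omega] at hpartner
    have := (hM.pairedBy_partner (q - a) hqM).1
    rw [length_middle ha] at this
    omega
  · intro hclosed
    refine PairedBy.isDyck (τ := fun q => partner w (a + q) - a) fun q hq => ?_
    rw [length_middle ha] at hq ⊢
    dsimp only
    obtain ⟨hlo, hhi⟩ := hclosed (a + q) (by omega) (by omega)
    obtain ⟨-, hμμ, hμne, hletter⟩ := hw.pairedBy_partner (a + q) (by omega)
    refine ⟨by omega, ?_, by omega, ?_⟩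
    · simp only [show a + (partner w (a + q) - a) = partner w (a + q) by omega, hμμ]
      omega
    · rw [getElem?_middle hq, hletter]
      simp only [Option.some.injEq, decide_eq_decide]
      omega

lemma IsDyck.isDyck_take_psi_iff (hw : IsDyck w) (ha : 2 * a ≤ w.length) :
    IsDyck ((psi w).take (2 * a)) ↔ ∀ q, a ≤ q → q < w.length - a →
      a ≤ partner w q ∧ partner w q < w.length - a := by
  rw [hw.pairedBy_psiPartner.isDyck_take_iff (by rw [length_psi]; exact ha)]
  have hP := hw.pairedBy_partner
  constructor
  · intro hclosed q hq hq'
    obtain ⟨hμL, hμμ, -, -⟩ := hP q (by omega)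
    have hpz : zigR 0 w.length (zigInv w.length (partner w q)) = partner w q :=
      zigR_zero_zigInv hμL
    have hτ : psiPartner w (zigInv w.length (partner w q)) = zigInv w.length q := by
      rw [psiPartner, hpz, hμμ]
    by_contra hout
    have hread := hclosed (zigInv w.length (partner w q))
      ((lt_two_mul_iff_zigR_zero ha (zigInv_lt hμL)).2 (by rw [hpz]; omega))
    rw [hτ, lt_two_mul_iff_zigR_zero ha (zigInv_lt (by omega)),
      zigR_zero_zigInv (by omega)] at hread
    omega
  · intro hclosed p hp
    have hpL : p < w.length := by omega
    have hout := (lt_two_mul_iff_zigR_zero ha hpL).1 hp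
    obtain ⟨hμL, hμμ, -, -⟩ := hP _ (zigR_zero_lt hpL)
    rw [psiPartner, lt_two_mul_iff_zigR_zero ha (zigInv_lt hμL), zigR_zero_zigInv hμL]
    by_contra hin
    have := hclosed (partner w (zigR 0 w.length p)) (by omega) (by omega)
    rw [hμμ] at this
    omega

lemma IsDyck.isDyck_take_psi_iff_isDyck_middle (hw : IsDyck w) (ha : 2 * a ≤ w.length) :
    IsDyck ((psi w).take (2 * a)) ↔ IsDyck (middle w a) := by
  rw [hw.isDyck_take_psi_iff ha, hw.isDyck_middle_iff ha]

end Middle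

lemma setOf_arches_eq {w : List Bool} (hw : IsDyck w) :
    {i : ℕ | ∃ X B Y : List Bool, IsDyck X ∧ IsDyck B ∧ IsDyck Y ∧
      w = X ++ true :: (B ++ false :: Y) ∧ X.length = i} =
    {i : ℕ | i < w.length ∧ IsDyck (w.take i)} := by
  ext i
  constructor
  · rintro ⟨X, B, Y, hX, -, -, rfl, rfl⟩
    simp [hX]
  · rintro ⟨hi, hX⟩
    obtain ⟨B, Y, hB, hY, hBY⟩ :=
      (hw.drop hX).exists_arch (by simpa [List.drop_eq_nil_iff] using hi)
    exact ⟨w.take i, B, Y, hX, hB, hY, by rw [← hBY, List.take_append_drop],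
      by simp; omega⟩

lemma IsDyck.setOf_isDyck_take_psi_eq_image {w : List Bool} (hw : IsDyck w) :
    {i : ℕ | i < (psi w).length ∧ IsDyck ((psi w).take i)} =
      (2 * ·) '' {a : ℕ | 2 * a < w.length ∧ IsDyck (middle w a)} := by
  ext i
  simp only [Set.mem_ofPred_eq, Set.mem_image, length_psi]
  constructor
  · rintro ⟨hi, hpre⟩
    have heven := hpre.length_mod_two
    rw [List.length_take, length_psi] at heven
    refine ⟨i / 2, ⟨by omega, ?_⟩, by omega⟩
    rwa [← hw.isDyck_take_psi_iff_isDyck_middle (by omega), show 2 * (i / 2) = i by omega]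
  · rintro ⟨a, ⟨ha, hM⟩, rfl⟩
    exact ⟨ha, (hw.isDyck_take_psi_iff_isDyck_middle ha.le).mpr hM⟩

lemma setOf_centered_multitunnels_eq_image (w : List Bool) :
    {q : ℕ × ℕ | ∃ A B C : List Bool, IsDyck B ∧ B ≠ [] ∧ w = A ++ B ++ C ∧
      A.length = q.1 ∧ B.length = q.2 ∧ A.length = C.length + 2 * 0} =
      (fun a => (a, w.length - 2 * a)) '' {a : ℕ | 2 * a < w.length ∧ IsDyck (middle w a)} := by
  ext ⟨q₁, q₂⟩
  simp only [Set.mem_ofPred_eq, Set.mem_image, Prod.mk.injEq]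
  constructor
  · rintro ⟨A, B, C, hB, hne, rfl, rfl, rfl, hAC⟩
    have hB0 := List.length_pos_iff.mpr hne
    have hmid : middle (A ++ B ++ C) A.length = B := by
      simp only [middle, List.append_assoc, List.drop_left, List.length_append]
      exact List.take_left' (by omega)
    refine ⟨A.length, ⟨by simp; omega, by rwa [hmid]⟩, rfl, by simp; omega⟩
  · rintro ⟨a, ⟨ha, hM⟩, rfl, rfl⟩
    refine ⟨w.take a, middle w a, w.drop (w.length - a), hM, ?_,
      (take_append_middle_append_drop ha.le).symm, by simp; omega, length_middle ha.le,
      by simp; omega⟩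
    rw [← List.length_pos_iff, length_middle ha.le]
    omega

/-- for every Dyck word `D`, `cmt(D) = ret(Ψ(D))`. -/
theorem cmtun_eq_numArches_psi (D : List Bool) (hD : IsDyck D) :
    cmtun D = numArches (psi D) := by
  rw [cmtun, mtunEq, setOf_centered_multitunnels_eq_image, numArches,
    setOf_arches_eq hD.pairedBy_psiPartner.isDyck, hD.setOf_isDyck_take_psi_eq_image,
    Set.ncard_image_of_injective _ fun a b h => (Prod.mk.inj h).1,
    Set.ncard_image_of_injective _ fun a b (h : 2 * a = 2 * b) => by omega]

end DyckBij
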